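/- The following equations are derivable from EqFSCL by equational logic: (1) (x ∨◦ y) ∧◦ (z ∧◦ F) = (¬x ∨◦ (z ∧◦ F)) ∧◦ (y ∧◦ (z ∧◦ F)); (2) (x ∨◦ (y ∧◦ F)) ∧◦ (z ∧◦ F) = (¬x ∨◦ (z ∧◦ F)) ∧◦ (y ∧◦ F); (3) (x ∧◦ (y ∨◦ T)) ∨◦ (z ∧◦ F) = (x ∨◦ (z ∧◦ F)) ∧◦ (y ∨◦ T). -/
import Mathlib


/-! Shared definitions for left-sequential logics (FEL and SCL),
    evaluation trees, and decompositions. -/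

/-- FEL-terms over atoms `A` (`and` = full left-sequential conjunction `∧•`,
    `or` = full left-sequential disjunction `∨•`). -/
inductive FTerm (A : Type) : Type
  | atom : A → FTerm A
  | tru  : FTerm A
  | fls  : FTerm A
  | neg  : FTerm A → FTerm A
  | and  : FTerm A → FTerm A → FTerm A
  | or   : FTerm A → FTerm A → FTerm A

/-- SCL-terms over atoms `A` (`and` = short-circuit conjunction `∧◦`,
    `or` = short-circuit disjunction `∨◦`). -/
inductive STerm (A : Type) : Type
  | atom : A → STerm A
  | tru  : STerm A
  | fls  : STerm A
  | neg  : STerm A → STerm A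
  | and  : STerm A → STerm A → STerm A
  | or   : STerm A → STerm A → STerm A

/-- Evaluation trees: finite binary trees over `A` with leaves `T`, `F`. -/
inductive ETree (A : Type) : Type
  | tru  : ETree A
  | fls  : ETree A
  | node : ETree A → A → ETree A → ETree A

namespace ETree

/-- `X.subst Y Z = X[T↦Y, F↦Z]`. -/
def subst {A : Type} : ETree A → ETree A → ETree A → ETree A
  | .tru, y, _ => y
  | .fls, _, z => z
  | .node l a r, y, z => .node (subst l y z) a (subst r y z)

def hasTru {A : Type} : ETree A → Prop
  | .tru => True
  | .fls => False
  | .node l _ r => hasTru l ∨ hasTru r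

def hasFls {A : Type} : ETree A → Prop
  | .tru => False
  | .fls => True
  | .node l _ r => hasFls l ∨ hasFls r

def depth {A : Type} : ETree A → ℕ
  | .tru => 0
  | .fls => 0
  | .node l _ r => 1 + max (depth l) (depth r)

end ETree

/-- The full evaluation function `fe : FTerm → 𝒯`. -/
def fe {A : Type} : FTerm A → ETree A
  | FTerm.tru => ETree.tru
  | FTerm.fls => ETree.fls
  | FTerm.atom a => ETree.node ETree.tru a ETree.fls
  | FTerm.neg p => (fe p).subst ETree.fls ETree.tru
  | FTerm.and p q => (fe p).subst (fe q) ((fe q).subst ETree.fls ETree.fls)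
  | FTerm.or p q => (fe p).subst ((fe q).subst ETree.tru ETree.tru) (fe q)

/-- The short-circuit evaluation function `se : STerm → 𝒯`. -/
def se {A : Type} : STerm A → ETree A
  | STerm.tru => ETree.tru
  | STerm.fls => ETree.fls
  | STerm.atom a => ETree.node ETree.tru a ETree.fls
  | STerm.neg p => (se p).subst ETree.fls ETree.tru
  | STerm.and p q => (se p).subst (se q) ETree.fls
  | STerm.or p q => (se p).subst ETree.tru (se q)

/-- Derivability from EqFFEL by equational logic. -/
inductive EqFFEL {A : Type} : FTerm A → FTerm A → Prop
  | refl (p : FTerm A) : EqFFEL p p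
  | symm {p q : FTerm A} : EqFFEL p q → EqFFEL q p
  | trans {p q r : FTerm A} : EqFFEL p q → EqFFEL q r → EqFFEL p r
  | neg_congr {p q : FTerm A} : EqFFEL p q → EqFFEL (FTerm.neg p) (FTerm.neg q)
  | and_congr {p p' q q' : FTerm A} :
      EqFFEL p p' → EqFFEL q q' → EqFFEL (FTerm.and p q) (FTerm.and p' q')
  | or_congr {p p' q q' : FTerm A} :
      EqFFEL p p' → EqFFEL q q' → EqFFEL (FTerm.or p q) (FTerm.or p' q')
  | fel1 : EqFFEL FTerm.fls (FTerm.neg FTerm.tru)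
  | fel2 (x y : FTerm A) : EqFFEL (FTerm.or x y) (FTerm.neg (FTerm.and (FTerm.neg x) (FTerm.neg y)))
  | fel3 (x : FTerm A) : EqFFEL (FTerm.neg (FTerm.neg x)) x
  | fel4 (x y z : FTerm A) : EqFFEL (FTerm.and (FTerm.and x y) z) (FTerm.and x (FTerm.and y z))
  | fel5 (x : FTerm A) : EqFFEL (FTerm.and FTerm.tru x) x
  | fel6 (x : FTerm A) : EqFFEL (FTerm.and x FTerm.tru) x
  | fel7 (x : FTerm A) : EqFFEL (FTerm.and x FTerm.fls) (FTerm.and FTerm.fls x)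
  | fel8 (x : FTerm A) : EqFFEL (FTerm.and x FTerm.fls) (FTerm.and (FTerm.neg x) FTerm.fls)
  | fel9 (x y : FTerm A) :
      EqFFEL (FTerm.or (FTerm.and x FTerm.fls) y) (FTerm.and (FTerm.or x FTerm.tru) y)
  | fel10 (x y : FTerm A) :
      EqFFEL (FTerm.or x (FTerm.and y FTerm.fls)) (FTerm.and x (FTerm.or y FTerm.tru))

/-- Derivability from EqFSCL by equational logic. -/
inductive EqFSCL {A : Type} : STerm A → STerm A → Prop
  | refl (p : STerm A) : EqFSCL p p
  | symm {p q : STerm A} : EqFSCL p q → EqFSCL q p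
  | trans {p q r : STerm A} : EqFSCL p q → EqFSCL q r → EqFSCL p r
  | neg_congr {p q : STerm A} : EqFSCL p q → EqFSCL (STerm.neg p) (STerm.neg q)
  | and_congr {p p' q q' : STerm A} :
      EqFSCL p p' → EqFSCL q q' → EqFSCL (STerm.and p q) (STerm.and p' q')
  | or_congr {p p' q q' : STerm A} :
      EqFSCL p p' → EqFSCL q q' → EqFSCL (STerm.or p q) (STerm.or p' q')
  | scl1 : EqFSCL STerm.fls (STerm.neg STerm.tru)
  | scl2 (x y : STerm A) : EqFSCL (STerm.or x y) (STerm.neg (STerm.and (STerm.neg x) (STerm.neg y)))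
  | scl3 (x : STerm A) : EqFSCL (STerm.neg (STerm.neg x)) x
  | scl4 (x y z : STerm A) : EqFSCL (STerm.and (STerm.and x y) z) (STerm.and x (STerm.and y z))
  | scl5 (x : STerm A) : EqFSCL (STerm.and STerm.tru x) x
  | scl6 (x : STerm A) : EqFSCL (STerm.and x STerm.tru) x
  | scl7 (x : STerm A) : EqFSCL (STerm.and STerm.fls x) STerm.fls
  | scl8 (x : STerm A) : EqFSCL (STerm.and x STerm.fls) (STerm.and (STerm.neg x) STerm.fls)
  | scl9 (x y : STerm A) :
      EqFSCL (STerm.or (STerm.and x STerm.fls) y) (STerm.and (STerm.or x STerm.tru) y)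
  | scl10 (x y z : STerm A) :
      EqFSCL (STerm.or (STerm.and x y) (STerm.and z STerm.fls))
             (STerm.and (STerm.or x (STerm.and z STerm.fls)) (STerm.or y (STerm.and z STerm.fls)))

/-! ### FEL Normal Form grammar -/

/-- T-terms: `P^T ::= T | a ∨• P^T`. -/
inductive IsFT_T {A : Type} : FTerm A → Prop
  | tru : IsFT_T FTerm.tru
  | or (a : A) {p : FTerm A} : IsFT_T p → IsFT_T (FTerm.or (FTerm.atom a) p)

/-- F-terms: `P^F ::= F | a ∧• P^F`. -/
inductive IsFT_F {A : Type} : FTerm A → Prop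
  | fls : IsFT_F FTerm.fls
  | and (a : A) {p : FTerm A} : IsFT_F p → IsFT_F (FTerm.and (FTerm.atom a) p)

/-- ℓ-terms: `P^ℓ ::= a ∧• P^T | ¬a ∧• P^T`. -/
inductive IsFT_L {A : Type} : FTerm A → Prop
  | pos (a : A) {p : FTerm A} : IsFT_T p → IsFT_L (FTerm.and (FTerm.atom a) p)
  | neg (a : A) {p : FTerm A} : IsFT_T p → IsFT_L (FTerm.and (FTerm.neg (FTerm.atom a)) p)

mutual
/-- `P^c ::= P^ℓ | P^* ∧• P^d`. -/
inductive IsFT_C {A : Type} : FTerm A → Prop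
  | ell {p : FTerm A} : IsFT_L p → IsFT_C p
  | and {p q : FTerm A} : IsFT_Star p → IsFT_D q → IsFT_C (FTerm.and p q)
/-- `P^d ::= P^ℓ | P^* ∨• P^c`. -/
inductive IsFT_D {A : Type} : FTerm A → Prop
  | ell {p : FTerm A} : IsFT_L p → IsFT_D p
  | or {p q : FTerm A} : IsFT_Star p → IsFT_C q → IsFT_D (FTerm.or p q)
/-- `P^* ::= P^c | P^d`. -/
inductive IsFT_Star {A : Type} : FTerm A → Prop
  | c {p : FTerm A} : IsFT_C p → IsFT_Star p
  | d {p : FTerm A} : IsFT_D p → IsFT_Star p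
end

/-- FEL Normal Form: `P ::= P^T | P^F | P^T ∧• P^*`. -/
inductive IsFNF {A : Type} : FTerm A → Prop
  | t {p : FTerm A} : IsFT_T p → IsFNF p
  | f {p : FTerm A} : IsFT_F p → IsFNF p
  | ts {p q : FTerm A} : IsFT_T p → IsFT_Star q → IsFNF (FTerm.and p q)

/-! ### SCL Normal Form grammar -/

/-- T-terms: `P^T ::= T | (a ∧◦ P^T) ∨◦ P^T`. -/
inductive IsST_T {A : Type} : STerm A → Prop
  | tru : IsST_T STerm.tru
  | or (a : A) {p q : STerm A} :
      IsST_T p → IsST_T q → IsST_T (STerm.or (STerm.and (STerm.atom a) p) q)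

/-- F-terms: `P^F ::= F | (a ∨◦ P^F) ∧◦ P^F`. -/
inductive IsST_F {A : Type} : STerm A → Prop
  | fls : IsST_F STerm.fls
  | and (a : A) {p q : STerm A} :
      IsST_F p → IsST_F q → IsST_F (STerm.and (STerm.or (STerm.atom a) p) q)

/-- ℓ-terms: `P^ℓ ::= (a ∧◦ P^T) ∨◦ P^F | (¬a ∧◦ P^T) ∨◦ P^F`. -/
inductive IsST_L {A : Type} : STerm A → Prop
  | pos (a : A) {p q : STerm A} :
      IsST_T p → IsST_F q → IsST_L (STerm.or (STerm.and (STerm.atom a) p) q)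
  | neg (a : A) {p q : STerm A} :
      IsST_T p → IsST_F q → IsST_L (STerm.or (STerm.and (STerm.neg (STerm.atom a)) p) q)

mutual
/-- `P^c ::= P^ℓ | P^* ∧◦ P^d`. -/
inductive IsST_C {A : Type} : STerm A → Prop
  | ell {p : STerm A} : IsST_L p → IsST_C p
  | and {p q : STerm A} : IsST_Star p → IsST_D q → IsST_C (STerm.and p q)
/-- `P^d ::= P^ℓ | P^* ∨◦ P^c`. -/
inductive IsST_D {A : Type} : STerm A → Prop
  | ell {p : STerm A} : IsST_L p → IsST_D p
  | or {p q : STerm A} : IsST_Star p → IsST_C q → IsST_D (STerm.or p q)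
/-- `P^* ::= P^c | P^d`. -/
inductive IsST_Star {A : Type} : STerm A → Prop
  | c {p : STerm A} : IsST_C p → IsST_Star p
  | d {p : STerm A} : IsST_D p → IsST_Star p
end

/-- SCL Normal Form: `P ::= P^T | P^F | P^T ∧◦ P^*`. -/
inductive IsSNF {A : Type} : STerm A → Prop
  | t {p : STerm A} : IsST_T p → IsSNF p
  | f {p : STerm A} : IsST_F p → IsSNF p
  | ts {p q : STerm A} : IsST_T p → IsST_Star q → IsSNF (STerm.and p q)

/-! ### Trees with box leaves -/

/-- `𝒯_□`: trees over `A` with leaves in `{T, F, □}`. -/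
inductive ETreeB (A : Type) : Type
  | tru  : ETreeB A
  | fls  : ETreeB A
  | box  : ETreeB A
  | node : ETreeB A → A → ETreeB A → ETreeB A

namespace ETreeB

/-- `X.substBox Y = X[□↦Y]`. -/
def substBox {A : Type} : ETreeB A → ETree A → ETree A
  | .tru, _ => ETree.tru
  | .fls, _ => ETree.fls
  | .box, y => y
  | .node l a r, y => ETree.node (substBox l y) a (substBox r y)

def hasBox {A : Type} : ETreeB A → Prop
  | .tru => False
  | .fls => False
  | .box => True
  | .node l _ r => hasBox l ∨ hasBox r

def hasTru {A : Type} : ETreeB A → Prop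
  | .tru => True
  | .fls => False
  | .box => False
  | .node l _ r => hasTru l ∨ hasTru r

def hasFls {A : Type} : ETreeB A → Prop
  | .tru => False
  | .fls => True
  | .box => False
  | .node l _ r => hasFls l ∨ hasFls r

end ETreeB

/-- `𝒯_{1,2}`: trees over `A` with leaves in `{T, F, □₁, □₂}`. -/
inductive ETree2 (A : Type) : Type
  | tru  : ETree2 A
  | fls  : ETree2 A
  | box1 : ETree2 A
  | box2 : ETree2 A
  | node : ETree2 A → A → ETree2 A → ETree2 A

namespace ETree2

/-- `X.substBoxes Y Z = X[□₁↦Y, □₂↦Z]`. -/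
def substBoxes {A : Type} : ETree2 A → ETree A → ETree A → ETree A
  | .tru, _, _ => ETree.tru
  | .fls, _, _ => ETree.fls
  | .box1, y, _ => y
  | .box2, _, z => z
  | .node l a r, y, z => ETree.node (substBoxes l y z) a (substBoxes r y z)

def hasBox1 {A : Type} : ETree2 A → Prop
  | .tru => False
  | .fls => False
  | .box1 => True
  | .box2 => False
  | .node l _ r => hasBox1 l ∨ hasBox1 r

def hasBox2 {A : Type} : ETree2 A → Prop
  | .tru => False
  | .fls => False
  | .box1 => False
  | .box2 => True
  | .node l _ r => hasBox2 l ∨ hasBox2 r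

def hasTru {A : Type} : ETree2 A → Prop
  | .tru => True
  | .fls => False
  | .box1 => False
  | .box2 => False
  | .node l _ r => hasTru l ∨ hasTru r

def hasFls {A : Type} : ETree2 A → Prop
  | .tru => False
  | .fls => True
  | .box1 => False
  | .box2 => False
  | .node l _ r => hasFls l ∨ hasFls r

end ETree2

namespace ETree

/-- `X[T↦□₁, F↦□₂]`. -/
def toBoxes {A : Type} : ETree A → ETree2 A
  | .tru => ETree2.box1
  | .fls => ETree2.box2
  | .node l a r => ETree2.node (toBoxes l) a (toBoxes r)

/-- `X[T↦□]`. -/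
def truToBox {A : Type} : ETree A → ETreeB A
  | .tru => ETreeB.box
  | .fls => ETreeB.fls
  | .node l a r => ETreeB.node (truToBox l) a (truToBox r)

/-- `X[F↦□]`. -/
def flsToBox {A : Type} : ETree A → ETreeB A
  | .tru => ETreeB.tru
  | .fls => ETreeB.box
  | .node l a r => ETreeB.node (flsToBox l) a (flsToBox r)

end ETree

/-! ### FEL decompositions -/

/-- Candidate conjunction decomposition (FEL):
    `X = Y[□₁↦Z, □₂↦Z[T↦F]]`, `Y` contains both boxes, neither `T` nor `F`,
    and `Z` contains both `T` and `F`. -/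
def IsCcdF {A : Type} (X : ETree A) (Y : ETree2 A) (Z : ETree A) : Prop :=
  X = Y.substBoxes Z (Z.subst ETree.fls ETree.fls) ∧
  Y.hasBox1 ∧ Y.hasBox2 ∧ ¬ Y.hasTru ∧ ¬ Y.hasFls ∧ Z.hasTru ∧ Z.hasFls

/-- Candidate disjunction decomposition (FEL):
    `X = Y[□₁↦Z[F↦T], □₂↦Z]` with the same side conditions. -/
def IsCddF {A : Type} (X : ETree A) (Y : ETree2 A) (Z : ETree A) : Prop :=
  X = Y.substBoxes (Z.subst ETree.tru ETree.tru) Z ∧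
  Y.hasBox1 ∧ Y.hasBox2 ∧ ¬ Y.hasTru ∧ ¬ Y.hasFls ∧ Z.hasTru ∧ Z.hasFls

/-- Conjunction decomposition (FEL): a ccd with `Z` of minimal depth. -/
def IsCdF {A : Type} (X : ETree A) (Y : ETree2 A) (Z : ETree A) : Prop :=
  IsCcdF X Y Z ∧ ∀ (Y' : ETree2 A) (Z' : ETree A), IsCcdF X Y' Z' → Z.depth ≤ Z'.depth

/-- Disjunction decomposition (FEL): a cdd with `Z` of minimal depth. -/
def IsDdF {A : Type} (X : ETree A) (Y : ETree2 A) (Z : ETree A) : Prop :=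
  IsCddF X Y Z ∧ ∀ (Y' : ETree2 A) (Z' : ETree A), IsCddF X Y' Z' → Z.depth ≤ Z'.depth

/-- T-*-decomposition (FEL): `X = Y[□↦Z]`, `Y` contains neither `T` nor `F`,
    and `Z` admits no nontrivial box decomposition. -/
def IsTsdF {A : Type} (X : ETree A) (Y : ETreeB A) (Z : ETree A) : Prop :=
  X = Y.substBox Z ∧ ¬ Y.hasTru ∧ ¬ Y.hasFls ∧
  ¬ ∃ (U : ETreeB A) (V : ETree A),
      Z = U.substBox V ∧ U.hasBox ∧ U ≠ ETreeB.box ∧ ¬ U.hasTru ∧ ¬ U.hasFls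

/-! ### SCL decompositions -/

/-- Candidate conjunction decomposition (SCL): `X = Y[□↦Z]`, `Y` contains `□`,
    `Y` contains `F` but not `T`, and `Z` contains both `T` and `F`. -/
def IsCcdS {A : Type} (X : ETree A) (Y : ETreeB A) (Z : ETree A) : Prop :=
  X = Y.substBox Z ∧ Y.hasBox ∧ Y.hasFls ∧ ¬ Y.hasTru ∧ Z.hasTru ∧ Z.hasFls

/-- Candidate disjunction decomposition (SCL): `X = Y[□↦Z]`, `Y` contains `□`,
    `Y` contains `T` but not `F`, and `Z` contains both `T` and `F`. -/
def IsCddS {A : Type} (X : ETree A) (Y : ETreeB A) (Z : ETree A) : Prop :=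
  X = Y.substBox Z ∧ Y.hasBox ∧ Y.hasTru ∧ ¬ Y.hasFls ∧ Z.hasTru ∧ Z.hasFls

/-- Conjunction decomposition (SCL): a ccd with `Z` of minimal depth. -/
def IsCdS {A : Type} (X : ETree A) (Y : ETreeB A) (Z : ETree A) : Prop :=
  IsCcdS X Y Z ∧ ∀ (Y' : ETreeB A) (Z' : ETree A), IsCcdS X Y' Z' → Z.depth ≤ Z'.depth

/-- Disjunction decomposition (SCL): a cdd with `Z` of minimal depth. -/
def IsDdS {A : Type} (X : ETree A) (Y : ETreeB A) (Z : ETree A) : Prop :=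
  IsCddS X Y Z ∧ ∀ (Y' : ETreeB A) (Z' : ETree A), IsCddS X Y' Z' → Z.depth ≤ Z'.depth

/-- Candidate T-*-decomposition (SCL). -/
def IsCtsdS {A : Type} (X : ETree A) (Y : ETreeB A) (Z : ETree A) : Prop :=
  X = Y.substBox Z ∧ ¬ Y.hasTru ∧ ¬ Y.hasFls ∧
  ¬ ∃ (U : ETreeB A) (V : ETree A),
      Z = U.substBox V ∧ U.hasBox ∧ U ≠ ETreeB.box ∧ ¬ U.hasTru ∧ ¬ U.hasFls

/-- T-*-decomposition (SCL): a ctsd with `Z` of minimal depth. -/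
def IsTsdS {A : Type} (X : ETree A) (Y : ETreeB A) (Z : ETree A) : Prop :=
  IsCtsdS X Y Z ∧ ∀ (Y' : ETreeB A) (Z' : ETree A), IsCtsdS X Y' Z' → Z.depth ≤ Z'.depth

/-- The translation `h : FTerm → STerm` from FEL-terms to SCL-terms. -/
def hTrans {A : Type} : FTerm A → STerm A
  | FTerm.tru => STerm.tru
  | FTerm.fls => STerm.fls
  | FTerm.atom a => STerm.atom a
  | FTerm.neg p => STerm.neg (hTrans p)
  | FTerm.and p q => STerm.and (STerm.or (hTrans p) (STerm.and (hTrans q) STerm.fls)) (hTrans q)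
  | FTerm.or p q => STerm.or (STerm.and (hTrans p) (STerm.or (hTrans q) STerm.tru)) (hTrans q)

section EqFSCLDerived

open STerm

variable {A : Type}

local infixl:65 " ∧◦ " => STerm.and (A := A)
local infixl:60 " ∨◦ " => STerm.or (A := A)
local prefix:70 "¬◦" => STerm.neg (A := A)

local infix:45 " ≡ " => EqFSCL (A := A)

instance : Trans (EqFSCL (A := A)) (EqFSCL (A := A)) (EqFSCL (A := A)) :=
  ⟨EqFSCL.trans⟩

namespace EqFSCL

private lemma notT : EqFSCL (¬◦(tru : STerm A)) fls := scl1.symm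

private lemma notF : EqFSCL (¬◦(fls : STerm A)) tru :=
  (neg_congr scl1).trans (scl3 _)

/-- De Morgan: `¬(x ∧ y) = ¬x ∨ ¬y`. -/
private lemma demAnd (x y : STerm A) : EqFSCL (¬◦(x ∧◦ y)) (¬◦x ∨◦ ¬◦y) :=
  ((scl2 (¬◦x) (¬◦y)).trans (neg_congr (and_congr (scl3 x) (scl3 y)))).symm

/-- De Morgan: `¬(x ∨ y) = ¬x ∧ ¬y`. -/
private lemma demOr (x y : STerm A) : EqFSCL (¬◦(x ∨◦ y)) (¬◦x ∧◦ ¬◦y) :=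
  (neg_congr (scl2 x y)).trans (scl3 _)

/-- `¬(z ∧ F) = z ∨ T`. -/
private lemma neg_andF (z : STerm A) : EqFSCL (¬◦(z ∧◦ fls)) (z ∨◦ tru) :=
  ((scl2 z tru).trans (neg_congr
    ((and_congr (refl _) notT).trans (scl8 z).symm))).symm

/-- `¬(z ∨ T) = z ∧ F`. -/
private lemma neg_orT (z : STerm A) : EqFSCL (¬◦(z ∨◦ tru)) (z ∧◦ fls) :=
  calc ¬◦(z ∨◦ tru) ≡ ¬◦z ∧◦ ¬◦tru := demOr z tru
    _ ≡ ¬◦z ∧◦ fls := and_congr (refl _) notT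
    _ ≡ z ∧◦ fls := (scl8 z).symm

/-- `T ∨ x = T`. -/
private lemma T_or (x : STerm A) : EqFSCL (tru ∨◦ x) tru :=
  calc tru ∨◦ x ≡ ¬◦(¬◦tru ∧◦ ¬◦x) := scl2 tru x
    _ ≡ ¬◦(fls ∧◦ ¬◦x) := neg_congr (and_congr notT (refl _))
    _ ≡ ¬◦fls := neg_congr (scl7 _)
    _ ≡ tru := notF

/-- Associativity of `∨`. -/
private lemma or_assoc' (x y z : STerm A) : EqFSCL ((x ∨◦ y) ∨◦ z) (x ∨◦ (y ∨◦ z)) :=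
  calc (x ∨◦ y) ∨◦ z ≡ ¬◦(¬◦(x ∨◦ y) ∧◦ ¬◦z) := scl2 _ z
    _ ≡ ¬◦((¬◦x ∧◦ ¬◦y) ∧◦ ¬◦z) := neg_congr (and_congr (demOr x y) (refl _))
    _ ≡ ¬◦(¬◦x ∧◦ (¬◦y ∧◦ ¬◦z)) := neg_congr (scl4 _ _ _)
    _ ≡ ¬◦(¬◦x ∧◦ ¬◦(y ∨◦ z)) := neg_congr (and_congr (refl _) (demOr y z).symm)
    _ ≡ x ∨◦ (y ∨◦ z) := (scl2 x (y ∨◦ z)).symm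

/-- `(y ∨ T) ∨ w = y ∨ T`. -/
private lemma orT_or (y w : STerm A) : EqFSCL ((y ∨◦ tru) ∨◦ w) (y ∨◦ tru) :=
  (or_assoc' y tru w).trans (or_congr (refl _) (T_or w))

/-- `(z ∨ T) ∧ F = z ∧ F`. -/
private lemma E1 (z : STerm A) : EqFSCL ((z ∨◦ tru) ∧◦ fls) (z ∧◦ fls) :=
  calc (z ∨◦ tru) ∧◦ fls ≡ ¬◦(z ∨◦ tru) ∧◦ fls := scl8 _
    _ ≡ (z ∧◦ fls) ∧◦ fls := and_congr (neg_orT z) (refl _)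
    _ ≡ z ∧◦ (fls ∧◦ fls) := scl4 _ _ _
    _ ≡ z ∧◦ fls := and_congr (refl _) (scl7 fls)

/-- `(u ∨ v) ∧ F = ¬u ∧ (v ∧ F)`. -/
private lemma lemB (u v : STerm A) : EqFSCL ((u ∨◦ v) ∧◦ fls) (¬◦u ∧◦ (v ∧◦ fls)) :=
  calc (u ∨◦ v) ∧◦ fls ≡ ¬◦(u ∨◦ v) ∧◦ fls := scl8 _
    _ ≡ (¬◦u ∧◦ ¬◦v) ∧◦ fls := and_congr (demOr u v) (refl _)
    _ ≡ ¬◦u ∧◦ (¬◦v ∧◦ fls) := scl4 _ _ _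
    _ ≡ ¬◦u ∧◦ (v ∧◦ fls) := and_congr (refl _) (scl8 v).symm

/-- `¬(x ∧ (z ∨ T)) = ¬x ∨ (z ∧ F)`. -/
private lemma negAndOrT (x z : STerm A) :
    EqFSCL (¬◦(x ∧◦ (z ∨◦ tru))) (¬◦x ∨◦ (z ∧◦ fls)) :=
  (demAnd x (z ∨◦ tru)).trans (or_congr (refl _) (neg_orT z))

/-- Equation (3): `(x ∧ (y ∨ T)) ∨ (z ∧ F) = (x ∨ (z ∧ F)) ∧ (y ∨ T)`. -/
private lemma eq3 (x y z : STerm A) :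
    EqFSCL ((x ∧◦ (y ∨◦ tru)) ∨◦ (z ∧◦ fls)) ((x ∨◦ (z ∧◦ fls)) ∧◦ (y ∨◦ tru)) :=
  (scl10 x (y ∨◦ tru) z).trans
    (and_congr (refl _) (orT_or y (z ∧◦ fls)))

/-- Dual of scl10: `(x ∨ y) ∧ (z ∨ T) = (x ∧ (z ∨ T)) ∨ (y ∧ (z ∨ T))`. -/
private lemma dual10 (x y z : STerm A) :
    EqFSCL ((x ∨◦ y) ∧◦ (z ∨◦ tru)) ((x ∧◦ (z ∨◦ tru)) ∨◦ (y ∧◦ (z ∨◦ tru))) :=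
  calc (x ∨◦ y) ∧◦ (z ∨◦ tru)
      ≡ ¬◦(¬◦x ∧◦ ¬◦y) ∧◦ ¬◦(z ∧◦ fls) := and_congr (scl2 x y) (neg_andF z).symm
    _ ≡ ¬◦((¬◦x ∧◦ ¬◦y) ∨◦ (z ∧◦ fls)) := (demOr _ _).symm
    _ ≡ ¬◦((¬◦x ∨◦ (z ∧◦ fls)) ∧◦ (¬◦y ∨◦ (z ∧◦ fls))) := neg_congr (scl10 (¬◦x) (¬◦y) z)
    _ ≡ ¬◦(¬◦x ∨◦ (z ∧◦ fls)) ∨◦ ¬◦(¬◦y ∨◦ (z ∧◦ fls)) := demAnd _ _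
    _ ≡ (¬◦¬◦x ∧◦ ¬◦(z ∧◦ fls)) ∨◦ (¬◦¬◦y ∧◦ ¬◦(z ∧◦ fls)) := or_congr (demOr _ _) (demOr _ _)
    _ ≡ (x ∧◦ (z ∨◦ tru)) ∨◦ (y ∧◦ (z ∨◦ tru)) :=
        or_congr (and_congr (scl3 x) (neg_andF z)) (and_congr (scl3 y) (neg_andF z))

/-- Dual of (3): `(x ∨ (y ∧ F)) ∧ (z ∨ T) = (x ∧ (z ∨ T)) ∨ (y ∧ F)`. -/
private lemma eq3' (x y z : STerm A) :
    EqFSCL ((x ∨◦ (y ∧◦ fls)) ∧◦ (z ∨◦ tru)) ((x ∧◦ (z ∨◦ tru)) ∨◦ (y ∧◦ fls)) :=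
  calc (x ∨◦ (y ∧◦ fls)) ∧◦ (z ∨◦ tru)
      ≡ ¬◦(¬◦x ∧◦ ¬◦(y ∧◦ fls)) ∧◦ ¬◦(z ∧◦ fls) :=
        and_congr (scl2 x (y ∧◦ fls)) (neg_andF z).symm
    _ ≡ ¬◦(¬◦x ∧◦ (y ∨◦ tru)) ∧◦ ¬◦(z ∧◦ fls) :=
        and_congr (neg_congr (and_congr (refl _) (neg_andF y))) (refl _)
    _ ≡ ¬◦((¬◦x ∧◦ (y ∨◦ tru)) ∨◦ (z ∧◦ fls)) := (demOr _ _).symm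
    _ ≡ ¬◦((¬◦x ∨◦ (z ∧◦ fls)) ∧◦ (y ∨◦ tru)) := neg_congr (eq3 (¬◦x) y z)
    _ ≡ ¬◦(¬◦x ∨◦ (z ∧◦ fls)) ∨◦ ¬◦(y ∨◦ tru) := demAnd _ _
    _ ≡ (¬◦¬◦x ∧◦ ¬◦(z ∧◦ fls)) ∨◦ (y ∧◦ fls) := or_congr (demOr _ _) (neg_orT y)
    _ ≡ (x ∧◦ (z ∨◦ tru)) ∨◦ (y ∧◦ fls) :=
        or_congr (and_congr (scl3 x) (neg_andF z)) (refl _)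

/-- Equation (1). -/
private lemma eq1 (x y z : STerm A) :
    EqFSCL ((x ∨◦ y) ∧◦ (z ∧◦ fls))
      ((¬◦x ∨◦ (z ∧◦ fls)) ∧◦ (y ∧◦ (z ∧◦ fls))) :=
  calc (x ∨◦ y) ∧◦ (z ∧◦ fls)
      ≡ (x ∨◦ y) ∧◦ ((z ∨◦ tru) ∧◦ fls) := and_congr (refl _) (E1 z).symm
    _ ≡ ((x ∨◦ y) ∧◦ (z ∨◦ tru)) ∧◦ fls := (scl4 _ _ _).symm
    _ ≡ ((x ∧◦ (z ∨◦ tru)) ∨◦ (y ∧◦ (z ∨◦ tru))) ∧◦ fls := and_congr (dual10 x y z) (refl _)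
    _ ≡ ¬◦(x ∧◦ (z ∨◦ tru)) ∧◦ ((y ∧◦ (z ∨◦ tru)) ∧◦ fls) := lemB _ _
    _ ≡ ¬◦(x ∧◦ (z ∨◦ tru)) ∧◦ (y ∧◦ ((z ∨◦ tru) ∧◦ fls)) := and_congr (refl _) (scl4 _ _ _)
    _ ≡ ¬◦(x ∧◦ (z ∨◦ tru)) ∧◦ (y ∧◦ (z ∧◦ fls)) :=
        and_congr (refl _) (and_congr (refl _) (E1 z))
    _ ≡ (¬◦x ∨◦ (z ∧◦ fls)) ∧◦ (y ∧◦ (z ∧◦ fls)) := and_congr (negAndOrT x z) (refl _)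

/-- Equation (2). -/
private lemma eq2 (x y z : STerm A) :
    EqFSCL ((x ∨◦ (y ∧◦ fls)) ∧◦ (z ∧◦ fls))
      ((¬◦x ∨◦ (z ∧◦ fls)) ∧◦ (y ∧◦ fls)) :=
  calc (x ∨◦ (y ∧◦ fls)) ∧◦ (z ∧◦ fls)
      ≡ (x ∨◦ (y ∧◦ fls)) ∧◦ ((z ∨◦ tru) ∧◦ fls) := and_congr (refl _) (E1 z).symm
    _ ≡ ((x ∨◦ (y ∧◦ fls)) ∧◦ (z ∨◦ tru)) ∧◦ fls := (scl4 _ _ _).symm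
    _ ≡ ((x ∧◦ (z ∨◦ tru)) ∨◦ (y ∧◦ fls)) ∧◦ fls := and_congr (eq3' x y z) (refl _)
    _ ≡ ¬◦(x ∧◦ (z ∨◦ tru)) ∧◦ ((y ∧◦ fls) ∧◦ fls) := lemB _ _
    _ ≡ ¬◦(x ∧◦ (z ∨◦ tru)) ∧◦ (y ∧◦ (fls ∧◦ fls)) := and_congr (refl _) (scl4 _ _ _)
    _ ≡ ¬◦(x ∧◦ (z ∨◦ tru)) ∧◦ (y ∧◦ fls) :=
        and_congr (refl _) (and_congr (refl _) (scl7 fls))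
    _ ≡ (¬◦x ∨◦ (z ∧◦ fls)) ∧◦ (y ∧◦ fls) := and_congr (negAndOrT x z) (refl _)

end EqFSCL

end EqFSCLDerived

/-- derivable equations from EqFSCL (Lemma 3.1 of the paper). -/
theorem eqfscl_derived_equations (A : Type) [Countable A] (x y z : STerm A) :
    EqFSCL (STerm.and (STerm.or x y) (STerm.and z STerm.fls))
           (STerm.and (STerm.or (STerm.neg x) (STerm.and z STerm.fls))
                      (STerm.and y (STerm.and z STerm.fls))) ∧
    EqFSCL (STerm.and (STerm.or x (STerm.and y STerm.fls)) (STerm.and z STerm.fls))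
           (STerm.and (STerm.or (STerm.neg x) (STerm.and z STerm.fls))
                      (STerm.and y STerm.fls)) ∧
    EqFSCL (STerm.or (STerm.and x (STerm.or y STerm.tru)) (STerm.and z STerm.fls))
           (STerm.and (STerm.or x (STerm.and z STerm.fls))
                      (STerm.or y STerm.tru)) :=
  ⟨EqFSCL.eq1 x y z, EqFSCL.eq2 x y z, EqFSCL.eq3 x y z⟩
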